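/- arXiv:1807.05741 — 2 statements merged into one kernel-verified Lean document; each statement's English description precedes it below -/
import Mathlib

section
/- There exist constants c₁, c₂, C > 0 such that for every real β with 0 < |β| ≤ c₁, setting n = ⌊c₂ β^{−2}⌋ ≥ 1, the assignment P(ξ = −3/2) = 3/16 − √n β/6, P(ξ = −1/2) = 5/16 + √n β/2, P(ξ = 1/2) = 5/16 − √n β/2, P(ξ = 3/2) = 3/16 + √n β/6 defines a probability distribution on {−3/2, −1/2, 1/2, 3/2}, and a random variable ξ with this distribution satisfies E[ξ] = 0, E[ξ²] = 1, E[ξ³] = √n β, and E[ξ⁴] ≤ C. -/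
/-!
Take `c₁ = 1/2` and `c₂ = c₁²`. Then `n ≥ 1` and `n β² ≤ 1/4`, so `s = √n β` lies in `[-1/2, 1/2]`
and all four weights are nonnegative. The weights are affine in `s`, hence so is every moment;
the `s`-terms cancel in the even moments, and the moments come out as `0`, `1`, `s` and the
constant `31/16`.
-/

open MeasureTheory

section FiniteSupport

variable {Ω α : Type*} [MeasurableSpace Ω] [MeasurableSpace α] [MeasurableSingletonClass α]
  {P : Measure Ω} {ξ : Ω → α}

theorem integral_comp_eq_sum_of_ae_mem_finset {E : Type*} [NormedAddCommGroup E]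
    [NormedSpace ℝ E] [CompleteSpace E] [IsFiniteMeasure P] (hξ : Measurable ξ) {s : Finset α}
    (hs : ∀ᵐ ω ∂P, ξ ω ∈ s) (f : α → E) :
    ∫ ω, f (ξ ω) ∂P = ∑ x ∈ s, P.real (ξ ⁻¹' {x}) • f x := by
  have hfiber : ∀ x ∈ s, MeasurableSet (ξ ⁻¹' {x}) := fun x _ => hξ (measurableSet_singleton x)
  have hconst : ∀ x ∈ s, ∀ ω ∈ ξ ⁻¹' {x}, f (ξ ω) = f x := fun x _ ω hω => congrArg f hω
  calc ∫ ω, f (ξ ω) ∂P = ∫ ω in ⋃ x ∈ s, ξ ⁻¹' {x}, f (ξ ω) ∂P := by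
        refine (setIntegral_eq_integral_of_ae_compl_eq_zero ?_).symm
        filter_upwards [hs] with ω hω hω'
        exact (hω' (Set.mem_iUnion₂.2 ⟨ξ ω, hω, rfl⟩)).elim
    _ = ∑ x ∈ s, ∫ ω in ξ ⁻¹' {x}, f (ξ ω) ∂P :=
        integral_biUnion_finset s hfiber (Set.pairwiseDisjoint_fiber ξ s) fun x hx =>
          (integrableOn_const (C := f x)).congr_fun (fun ω hω => (hconst x hx ω hω).symm)
            (hfiber x hx)
    _ = ∑ x ∈ s, P.real (ξ ⁻¹' {x}) • f x := Finset.sum_congr rfl fun x hx => by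
        rw [setIntegral_congr_fun (hfiber x hx) (hconst x hx), setIntegral_const]

theorem ae_mem_of_sum_measure_preimage_singleton_eq_one [IsProbabilityMeasure P]
    (hξ : Measurable ξ) {s : Finset α} (h : ∑ x ∈ s, P (ξ ⁻¹' {x}) = 1) :
    ∀ᵐ ω ∂P, ξ ω ∈ s := by
  rw [sum_measure_preimage_singleton s fun x _ => hξ (measurableSet_singleton x)] at h
  exact (prob_compl_eq_zero_iff (hξ s.measurableSet)).2 h

end FiniteSupport

theorem integral_comp_of_four_point {Ω : Type*} [MeasurableSpace Ω] {P : Measure Ω}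
    [IsProbabilityMeasure P] {ξ : Ω → ℝ} (hξ : Measurable ξ) {p₁ p₂ p₃ p₄ : ℝ}
    (h₁ : 0 ≤ p₁) (h₂ : 0 ≤ p₂) (h₃ : 0 ≤ p₃) (h₄ : 0 ≤ p₄) (hsum : p₁ + p₂ + p₃ + p₄ = 1)
    (hP₁ : P {ω | ξ ω = -(3 / 2)} = ENNReal.ofReal p₁)
    (hP₂ : P {ω | ξ ω = -(1 / 2)} = ENNReal.ofReal p₂)
    (hP₃ : P {ω | ξ ω = 1 / 2} = ENNReal.ofReal p₃)
    (hP₄ : P {ω | ξ ω = 3 / 2} = ENNReal.ofReal p₄) (f : ℝ → ℝ) :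
    ∫ ω, f (ξ ω) ∂P = p₁ * f (-(3 / 2)) + p₂ * f (-(1 / 2)) + p₃ * f (1 / 2) + p₄ * f (3 / 2) := by
  have hsupport : ∑ x ∈ ({-(3 / 2), -(1 / 2), 1 / 2, 3 / 2} : Finset ℝ), P (ξ ⁻¹' {x}) = 1 := by
    rw [Finset.sum_insert (by norm_num), Finset.sum_insert (by norm_num),
      Finset.sum_pair (by norm_num)]
    simp only [Set.preimage, Set.mem_singleton_iff, hP₁, hP₂, hP₃, hP₄]
    rw [← ENNReal.ofReal_add h₃ h₄, ← ENNReal.ofReal_add h₂ (by positivity),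
      ← ENNReal.ofReal_add h₁ (by positivity), ← add_assoc, ← add_assoc, hsum, ENNReal.ofReal_one]
  rw [integral_comp_eq_sum_of_ae_mem_finset hξ
      (ae_mem_of_sum_measure_preimage_singleton_eq_one hξ hsupport) f,
    Finset.sum_insert (by norm_num), Finset.sum_insert (by norm_num),
    Finset.sum_pair (by norm_num)]
  simp only [Measure.real, Set.preimage, Set.mem_singleton_iff, hP₁, hP₂, hP₃, hP₄,
    ENNReal.toReal_ofReal h₁, ENNReal.toReal_ofReal h₂, ENNReal.toReal_ofReal h₃,
    ENNReal.toReal_ofReal h₄, smul_eq_mul]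
  ring

theorem one_le_floor_sq_div_sq {c β : ℝ} (hβ : 0 < |β|) (hβc : |β| ≤ c) :
    1 ≤ ⌊c ^ 2 / β ^ 2⌋₊ := by
  rw [Nat.one_le_floor_iff, one_le_div (by rw [← sq_abs]; positivity), ← sq_abs β]
  exact pow_le_pow_left₀ hβ.le hβc 2

theorem sqrt_floor_sq_div_sq_mul_abs_le {c : ℝ} (hc : 0 ≤ c) (β : ℝ) :
    √⌊c ^ 2 / β ^ 2⌋₊ * |β| ≤ c := by
  rcases eq_or_ne β 0 with rfl | hβ
  · simpa using hc
  have hfloor : (⌊c ^ 2 / β ^ 2⌋₊ : ℝ) * β ^ 2 ≤ c ^ 2 :=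
    (le_div_iff₀ (by positivity)).1 (Nat.floor_le (by positivity))
  calc √⌊c ^ 2 / β ^ 2⌋₊ * |β| = √(⌊c ^ 2 / β ^ 2⌋₊ * β ^ 2) := by
        rw [Real.sqrt_mul (Nat.cast_nonneg _), Real.sqrt_sq_eq_abs]
    _ ≤ √(c ^ 2) := Real.sqrt_le_sqrt hfloor
    _ = c := Real.sqrt_sq hc

/-- Construction of the auxiliary four-point distribution: there are constants
`c₁, c₂, C > 0` such that for every real `β` with `0 < |β| ≤ c₁`, putting
`n = ⌊c₂ β⁻²⌋ ≥ 1`, the assignment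
`P(ξ = -3/2) = 3/16 - √n β/6`, `P(ξ = -1/2) = 5/16 + √n β/2`,
`P(ξ = 1/2) = 5/16 - √n β/2`, `P(ξ = 3/2) = 3/16 + √n β/6`
is a probability distribution, and any random variable `ξ` with this distribution
satisfies `E ξ = 0`, `E ξ² = 1`, `E ξ³ = √n β` and `E ξ⁴ ≤ C`. -/
theorem four_point_distribution :
    ∃ c₁ c₂ C : ℝ, 0 < c₁ ∧ 0 < c₂ ∧ 0 < C ∧
      ∀ β : ℝ, 0 < |β| → |β| ≤ c₁ →
      ∀ n : ℕ, n = ⌊c₂ / β ^ 2⌋₊ →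
        1 ≤ n ∧
        (0 ≤ 3 / 16 - Real.sqrt n * β / 6 ∧ 0 ≤ 5 / 16 + Real.sqrt n * β / 2 ∧
          0 ≤ 5 / 16 - Real.sqrt n * β / 2 ∧ 0 ≤ 3 / 16 + Real.sqrt n * β / 6) ∧
        (3 / 16 - Real.sqrt n * β / 6) + (5 / 16 + Real.sqrt n * β / 2) +
          (5 / 16 - Real.sqrt n * β / 2) + (3 / 16 + Real.sqrt n * β / 6) = 1 ∧
        ∀ (Ω : Type) (_ : MeasurableSpace Ω) (P : Measure Ω)
          (_ : IsProbabilityMeasure P) (ξ : Ω → ℝ),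
          Measurable ξ →
          P {ω | ξ ω = -(3 / 2)} = ENNReal.ofReal (3 / 16 - Real.sqrt n * β / 6) →
          P {ω | ξ ω = -(1 / 2)} = ENNReal.ofReal (5 / 16 + Real.sqrt n * β / 2) →
          P {ω | ξ ω = 1 / 2} = ENNReal.ofReal (5 / 16 - Real.sqrt n * β / 2) →
          P {ω | ξ ω = 3 / 2} = ENNReal.ofReal (3 / 16 + Real.sqrt n * β / 6) →
          (∫ ω, ξ ω ∂P = 0 ∧ ∫ ω, ξ ω ^ 2 ∂P = 1 ∧
            ∫ ω, ξ ω ^ 3 ∂P = Real.sqrt n * β ∧ ∫ ω, ξ ω ^ 4 ∂P ≤ C) := by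
  refine ⟨1 / 2, (1 / 2) ^ 2, 31 / 16, by norm_num, by norm_num, by norm_num, ?_⟩
  intro β hβ hβc₁ n hn
  have hs : |√n * β| ≤ 1 / 2 := by
    rw [abs_mul, abs_of_nonneg (Real.sqrt_nonneg _), hn]
    exact sqrt_floor_sq_div_sq_mul_abs_le (by norm_num) β
  obtain ⟨hs_lo, hs_hi⟩ := abs_le.1 hs
  have h₁ : 0 ≤ 3 / 16 - √n * β / 6 := by linarith
  have h₂ : 0 ≤ 5 / 16 + √n * β / 2 := by linarith
  have h₃ : 0 ≤ 5 / 16 - √n * β / 2 := by linarith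
  have h₄ : 0 ≤ 3 / 16 + √n * β / 6 := by linarith
  refine ⟨hn ▸ one_le_floor_sq_div_sq hβ hβc₁, ⟨h₁, h₂, h₃, h₄⟩, by ring, ?_⟩
  intro Ω _ P _ ξ hξ hP₁ hP₂ hP₃ hP₄
  have hmoment := integral_comp_of_four_point hξ h₁ h₂ h₃ h₄ (by ring) hP₁ hP₂ hP₃ hP₄
  refine ⟨?_, ?_, ?_, ?_⟩
  · exact (hmoment fun x => x).trans (by ring)
  · exact (hmoment (· ^ 2)).trans (by ring)
  · exact (hmoment (· ^ 3)).trans (by ring)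
  · exact ((hmoment (· ^ 4)).trans (by ring)).le
end

section
/- In the setting of subgraph counts of a fixed graph G in the Erdős–Rényi random graph K(n,p) with 1/2 < p < 1, with X_i = σ^{−1}(Y_i − p^{e(G)}) indexed by the copies G_i of G (where Y_i is the indicator that all edges of G_i are present, σ² = Var(S), S is the total number of copies of G), with neighborhoods A_i = {j : e(G_j ∩ G_i) ≥ 1}, A_{ij} = {k : e(G_k ∩ (G_i ∪ G_j)) ≥ 1}, A_{ijk} = {l : e(G_l ∩ (G_i ∪ G_j ∪ G_k)) ≥ 1}, the quantity γ = γ₁ + γ₂ + γ₃ satisfies γ ≤ C(G) n^{−2}(1 − p)^{−1}, where C(G) depends only on G. -/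
/-!
Each `X_i` is bounded by `σ⁻¹`, and `E|X_i| ≤ 2 e(G) (1 - p) σ⁻¹` since `Y_i` is an indicator
with mean `p^e(G) ≥ 1 - e(G) (1 - p)`; so every summand of `γ₁, γ₂, γ₃` is at most
`2 e(G) (1 - p) σ⁻⁴`. A copy sharing an edge with a union of `s` copies is pinned on the two ends of
that edge, so the neighbourhoods have at most `2 s e(G)² n^(v-2)` elements and `γ` has
`O(n^v · n^(3(v-2)))` summands. For the variance, all covariances `Cov(Y_i, Y_j)` are nonnegative,
two copies agreeing on an edge `ab` of `G` have covariance at least `p^(2e(G)) (1 - p)`, and by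
Cauchy–Schwarz over the images of `(a, b)` there are at least `(n)_v² / n²` such pairs. With
`p > 1/2` and `n^v ≤ v^v (n)_v` this gives `σ² ≥ c (1 - p) n^(2v-2)`, whence the bound.
-/

open MeasureTheory ProbabilityTheory

/-- The Erdős–Rényi random graph `K(n,p)`: every (unordered) pair of vertices of `Fin n`
carries an independent Bernoulli(`p`) indicator of being an edge. -/
noncomputable def erdosRenyi (n : ℕ) (p : ENNReal) (hp : p ≤ 1) :
    Measure (Sym2 (Fin n) → Bool) :=
  Measure.pi fun _ =>
    (PMF.ofFintype (fun b => cond b p (1 - p)) (by simp [add_tsub_cancel_of_le hp])).toMeasure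

/-- The indicator `Y_i` that all edges of the copy `G_i` of `G` (given by an embedding
`f` of the vertices of `G`) are present in the random graph `ω`. -/
noncomputable def copyIndicator {V : Type} [Fintype V] [DecidableEq V]
    (G : SimpleGraph V) [DecidableRel G.Adj] {n : ℕ} (f : V ↪ Fin n)
    (ω : Sym2 (Fin n) → Bool) : ℝ :=
  ∏ e ∈ G.edgeFinset, (if ω (Sym2.map (⇑f) e) then (1 : ℝ) else 0)

/-- The total number of copies of `G` (counted via embeddings). -/
noncomputable def subgraphCount {V : Type} [Fintype V] [DecidableEq V]
    (G : SimpleGraph V) [DecidableRel G.Adj] (n : ℕ) (ω : Sym2 (Fin n) → Bool) : ℝ :=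
  ∑ f : V ↪ Fin n, copyIndicator G f ω

/-- The edge set of the copy `G_i` of `G` given by the embedding `f`. -/
noncomputable def copyEdges {V : Type} [Fintype V] [DecidableEq V]
    (G : SimpleGraph V) [DecidableRel G.Adj] {n : ℕ} (f : V ↪ Fin n) :
    Finset (Sym2 (Fin n)) :=
  Finset.image (Sym2.map (⇑f)) G.edgeFinset

open Classical in
/-- The neighborhoods `A_i`, `A_{ij}`, `A_{ijk}`: copies sharing at least one edge with
`G_i`, `G_i ∪ G_j`, `G_i ∪ G_j ∪ G_k` respectively; `nbhd G s` is the set of copies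
sharing an edge with the union of the copies indexed by `s`. -/
noncomputable def nbhd {V : Type} [Fintype V] [DecidableEq V]
    (G : SimpleGraph V) [DecidableRel G.Adj] {n : ℕ} (s : Finset (V ↪ Fin n)) :
    Finset (V ↪ Fin n) :=
  Finset.univ.filter fun g => (copyEdges G g ∩ s.sup (copyEdges G)).Nonempty

open Finset
open scoped ENNReal

theorem card_sq_le_card_mul_card_filter_eq {α β : Type*} [Fintype α] [Fintype β] [DecidableEq β]
    (φ : α → β) :
    Fintype.card α ^ 2 ≤ Fintype.card β * #{q : α × α | φ q.1 = φ q.2} := by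
  set c : β → ℕ := fun b => #{x | φ x = b}
  have h_card : Fintype.card α = ∑ b, c b :=
    card_eq_sum_card_fiberwise fun x _ => mem_univ (φ x)
  have h_pairs : #{q : α × α | φ q.1 = φ q.2} = ∑ b, c b ^ 2 := by
    rw [card_filter, Fintype.sum_prod_type, ← sum_fiberwise univ φ]
    refine sum_congr rfl fun b _ => ?_
    rw [sq, ← smul_eq_mul, ← sum_const]
    refine sum_congr rfl fun x hx => ?_
    rw [← (mem_filter.1 hx).2, ← card_filter]
    exact congrArg card (filter_congr fun y _ => eq_comm)
  rw [h_card, h_pairs]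
  exact sq_sum_le_card_mul_sum_sq

theorem Nat.pow_le_pow_self_mul_descFactorial {k m : ℕ} (h : k ≤ m) :
    m ^ k ≤ k ^ k * m.descFactorial k := by
  obtain ⟨d, rfl⟩ := Nat.exists_eq_add_of_le h
  rcases k.eq_zero_or_pos with rfl | hk
  · simp
  calc (k + d) ^ k ≤ (k * (k + d + 1 - k)) ^ k := by
        gcongr
        rw [show k + d + 1 - k = d + 1 by omega]
        nlinarith
    _ = k ^ k * (k + d + 1 - k) ^ k := mul_pow _ _ _
    _ ≤ k ^ k * (k + d).descFactorial k := by gcongr; exact Nat.pow_sub_le_descFactorial _ _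

theorem card_embedding_filter_apply_eq_le {V W : Type*} [Fintype V] [DecidableEq V] [Fintype W]
    [DecidableEq W] {a b : V} (hab : a ≠ b) (x y : W) :
    #{g : V ↪ W | g a = x ∧ g b = y} ≤ Fintype.card W ^ (Fintype.card V - 2) := by
  calc #{g : V ↪ W | g a = x ∧ g b = y}
      ≤ Fintype.card (↥({a, b} : Finset V)ᶜ → W) := by
        refine card_le_card_of_injOn (fun (g : V ↪ W) (z : ↥({a, b} : Finset V)ᶜ) => g z)
          (fun _ _ => mem_coe.2 (mem_univ _)) ?_
        intro g hg g' hg' hgg'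
        simp only [mem_coe, mem_filter, mem_univ, true_and] at hg hg'
        ext z
        by_cases hz : z ∈ ({a, b} : Finset V)
        · rcases mem_insert.1 hz with rfl | hz
          · rw [hg.1, hg'.1]
          · rw [mem_singleton.1 hz, hg.2, hg'.2]
        · exact congrFun hgg' ⟨z, mem_compl.2 hz⟩
    _ = Fintype.card W ^ (Fintype.card V - 2) := by
        rw [Fintype.card_fun, Fintype.card_coe, card_compl, card_pair hab]

theorem card_embedding_filter_map_eq_le {V W : Type*} [Fintype V] [DecidableEq V] [Fintype W]
    [DecidableEq W] {a b : V} (hab : a ≠ b) (t : Sym2 W) :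
    #{g : V ↪ W | Sym2.map g s(a, b) = t} ≤ 2 * Fintype.card W ^ (Fintype.card V - 2) := by
  induction t using Sym2.ind with
  | _ x y =>
    have h_sub : ({g : V ↪ W | Sym2.map g s(a, b) = s(x, y)} : Finset _) ⊆
        ({g : V ↪ W | g a = x ∧ g b = y} : Finset _) ∪
          ({g : V ↪ W | g a = y ∧ g b = x} : Finset _) := by
      intro g
      simp only [mem_filter, mem_union, mem_univ, true_and, Sym2.map_mk, Sym2.eq_iff]
      exact id
    calc _ ≤ _ := card_le_card h_sub
      _ ≤ _ := card_union_le _ _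
      _ ≤ _ := by
        have := card_embedding_filter_apply_eq_le hab x y
        have := card_embedding_filter_apply_eq_le hab y x
        omega

theorem sum_le_of_card_le {ι : Type*} {s : Finset ι} {m : ℕ} {f : ι → ℝ} {c : ℝ}
    (hs : #s ≤ m) (hc : 0 ≤ c) (hf : ∀ i ∈ s, f i ≤ c) : ∑ i ∈ s, f i ≤ m * c :=
  calc ∑ i ∈ s, f i ≤ #s * c := by simpa using sum_le_card_nsmul s f c hf
    _ ≤ m * c := by gcongr

theorem sum_nested_nbhd_le {ι : Type*} [Fintype ι] [DecidableEq ι] (A : Finset ι → Finset ι)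
    {M : ℕ} (hA : ∀ s, #(A s) ≤ #s * M) {F : ι → ι → ι → ι → ℝ} {c : ℝ} (hc : 0 ≤ c)
    (hF : ∀ i j k l, F i j k l ≤ c) :
    ∑ i, ∑ j ∈ A {i}, ∑ k ∈ A {i, j}, ∑ l ∈ A {i, j, k}, F i j k l ≤
      Fintype.card ι * (6 * M ^ 3) * c := by
  have hA' : ∀ s : Finset ι, ∀ m, #s ≤ m → #(A s) ≤ m * M := fun s m hs =>
    (hA s).trans (Nat.mul_le_mul_right M hs)
  have h3 : ∀ i j k : ι, #({i, j, k} : Finset ι) ≤ 3 := fun i j k =>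
    (card_insert_le _ _).trans (Nat.succ_le_succ card_le_two)
  calc _ ≤ Fintype.card ι * ((1 * M : ℕ) * ((2 * M : ℕ) * ((3 * M : ℕ) * c))) := by
        refine sum_le_of_card_le (card_univ.le) (by positivity) fun i _ => ?_
        refine sum_le_of_card_le (hA' _ _ (card_singleton i).le) (by positivity) fun j _ => ?_
        refine sum_le_of_card_le (hA' _ _ card_le_two) (by positivity) fun k _ => ?_
        exact sum_le_of_card_le (hA' _ _ (h3 i j k)) hc fun l _ => hF i j k l
    _ = Fintype.card ι * (6 * M ^ 3) * c := by push_cast; ring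

section Moments

variable {Ω : Type*} [MeasurableSpace Ω] {μ : Measure Ω}

theorem integral_abs_le_mul_integral_abs {Y Z : Ω → ℝ} {B : ℝ} (hY : Integrable Y μ)
    (h : ∀ ω, |Z ω| ≤ B * |Y ω|) : ∫ ω, |Z ω| ∂μ ≤ B * ∫ ω, |Y ω| ∂μ := by
  rw [← integral_const_mul]
  exact integral_mono_of_nonneg (ae_of_all _ fun ω => abs_nonneg _) (hY.abs.const_mul B)
    (ae_of_all _ h)

variable [IsProbabilityMeasure μ]

theorem integral_abs_le_of_abs_le {Z : Ω → ℝ} {B : ℝ} (h : ∀ ω, |Z ω| ≤ B) :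
    ∫ ω, |Z ω| ∂μ ≤ B := by
  simpa using integral_mono_of_nonneg (ae_of_all _ fun ω => abs_nonneg (Z ω))
    (integrable_const (μ := μ) B) (ae_of_all _ h)

theorem integral_abs_sub_integral_le {Y : Ω → ℝ} (hY : Integrable Y μ)
    (h1 : ∀ ω, Y ω ≤ 1) : ∫ ω, |Y ω - ∫ ω, Y ω ∂μ| ∂μ ≤ 2 * (1 - ∫ ω, Y ω ∂μ) := by
  have h_mean : ∫ ω, Y ω ∂μ ≤ 1 := by
    simpa using integral_mono hY (integrable_const (μ := μ) 1) h1
  calc ∫ ω, |Y ω - ∫ ω, Y ω ∂μ| ∂μ ≤ ∫ ω, (2 - ∫ ω, Y ω ∂μ - Y ω) ∂μ :=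
        integral_mono_of_nonneg (ae_of_all _ fun _ => abs_nonneg _)
          ((integrable_const _).sub hY) (ae_of_all _ fun ω =>
            abs_le.2 ⟨by linarith [h1 ω], by linarith [h1 ω]⟩)
    _ = 2 * (1 - ∫ ω, Y ω ∂μ) := by
        rw [integral_sub (integrable_const _) hY, integral_const, probReal_univ, one_smul]
        ring

theorem gamma_sums_le {ι : Type*} [Fintype ι] [DecidableEq ι] (A : Finset ι → Finset ι) {M : ℕ}
    (hA : ∀ s, #(A s) ≤ #s * M) {X : ι → Ω → ℝ} {B δ : ℝ} (hX : ∀ i, Integrable (X i) μ)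
    (hB0 : 0 ≤ B) (hB : ∀ i ω, |X i ω| ≤ B) (hδ : 0 ≤ δ)
    (hXδ : ∀ i, ∫ ω, |X i ω| ∂μ ≤ B * δ) :
    (∑ i, ∑ j ∈ A {i}, ∑ k ∈ A {i, j}, ∑ l ∈ A {i, j, k},
        ∫ ω, |X i ω * X j ω * X k ω * X l ω| ∂μ) +
      (∑ i, ∑ j ∈ A {i}, ∑ k ∈ A {i, j}, ∑ l ∈ A {i, j, k},
        (∫ ω, |X i ω * X j ω| ∂μ) * ∫ ω, |X k ω * X l ω| ∂μ) +
      (∑ i, ∑ j ∈ A {i}, ∑ k ∈ A {i, j}, ∑ l ∈ A {i, j, k},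
        (∫ ω, |X i ω * X j ω * X k ω| ∂μ) * ∫ ω, |X l ω| ∂μ) ≤
      3 * (Fintype.card ι * (6 * M ^ 3) * (B ^ 4 * δ)) := by
  have h_int : ∀ i {Z : Ω → ℝ} {m : ℕ}, (∀ ω, |Z ω| ≤ B ^ m * |X i ω|) →
      ∫ ω, |Z ω| ∂μ ≤ B ^ (m + 1) * δ := fun i Z m hZ =>
    calc ∫ ω, |Z ω| ∂μ ≤ B ^ m * ∫ ω, |X i ω| ∂μ := integral_abs_le_mul_integral_abs (hX i) hZ
      _ ≤ B ^ m * (B * δ) := by gcongr; exact hXδ i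
      _ = B ^ (m + 1) * δ := by ring
  have h_four : ∀ i j k l, ∫ ω, |X i ω * X j ω * X k ω * X l ω| ∂μ ≤ B ^ 4 * δ :=
    fun i j k l => h_int i fun ω => by
      simp only [abs_mul]
      calc _ ≤ |X i ω| * B * B * B := by gcongr <;> apply hB
        _ = _ := by ring
  have h_le_sq : ∀ k l, ∫ ω, |X k ω * X l ω| ∂μ ≤ B ^ 2 := fun k l =>
    integral_abs_le_of_abs_le fun ω => by rw [abs_mul, sq]; gcongr <;> apply hB
  have h_two : ∀ i j, ∫ ω, |X i ω * X j ω| ∂μ ≤ B ^ 2 * δ := fun i j =>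
    h_int i fun ω => by rw [abs_mul, mul_comm, pow_one]; gcongr; apply hB
  have h_three : ∀ i j k, ∫ ω, |X i ω * X j ω * X k ω| ∂μ ≤ B ^ 3 * δ := fun i j k =>
    h_int i fun ω => by
      simp only [abs_mul]
      calc _ ≤ |X i ω| * B * B := by gcongr <;> apply hB
        _ = _ := by ring
  have h_two_two : ∀ i j k l,
      (∫ ω, |X i ω * X j ω| ∂μ) * ∫ ω, |X k ω * X l ω| ∂μ ≤ B ^ 4 * δ := fun i j k l =>
    calc _ ≤ (B ^ 2 * δ) * B ^ 2 :=
          mul_le_mul (h_two i j) (h_le_sq k l) (integral_nonneg fun _ => abs_nonneg _)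
            (by positivity)
      _ = B ^ 4 * δ := by ring
  have h_three_one : ∀ i j k l,
      (∫ ω, |X i ω * X j ω * X k ω| ∂μ) * ∫ ω, |X l ω| ∂μ ≤ B ^ 4 * δ := fun i j k l =>
    calc _ ≤ (B ^ 3 * δ) * B :=
          mul_le_mul (h_three i j k) (integral_abs_le_of_abs_le (hB l))
            (integral_nonneg fun _ => abs_nonneg _) (by positivity)
      _ = B ^ 4 * δ := by ring
  have hc : 0 ≤ B ^ 4 * δ := by positivity
  linarith [sum_nested_nbhd_le A hA hc h_four, sum_nested_nbhd_le A hA hc h_two_two,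
    sum_nested_nbhd_le A hA hc h_three_one]

end Moments

instance isProbabilityMeasure_erdosRenyi (n : ℕ) (p : ℝ≥0∞) (hp : p ≤ 1) :
    IsProbabilityMeasure (erdosRenyi n p hp) := by
  unfold erdosRenyi; infer_instance

theorem integral_prod_edge_erdosRenyi (n : ℕ) (p : ℝ≥0∞) (hp : p ≤ 1)
    (S : Finset (Sym2 (Fin n))) :
    ∫ ω, ∏ s ∈ S, (if ω s then (1 : ℝ) else 0) ∂erdosRenyi n p hp = p.toReal ^ #S := by
  set ν :=
    (PMF.ofFintype (fun b => cond b p (1 - p)) (by simp [add_tsub_cancel_of_le hp])).toMeasure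
  have h_fubini := integral_fintype_prod_eq_prod (μ := fun _ => ν)
    fun s (b : Bool) => if s ∈ S then (if b then (1 : ℝ) else 0) else 1
  have h_factor : ∀ s, ∫ b, (if s ∈ S then (if b then (1 : ℝ) else 0) else 1) ∂ν
      = if s ∈ S then p.toReal else 1 := by
    intro s
    split_ifs
    · simp [ν, PMF.integral_eq_sum]
    · rw [integral_const, probReal_univ, one_smul]
  simp only [h_factor, Fintype.prod_ite_mem, prod_const] at h_fubini
  exact h_fubini

section Copies

variable {V : Type} [Fintype V] [DecidableEq V] (G : SimpleGraph V) [DecidableRel G.Adj] {n : ℕ}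

theorem card_copyEdges (f : V ↪ Fin n) : #(copyEdges G f) = #G.edgeFinset :=
  card_image_of_injective _ (Sym2.map.injective f.injective)

theorem card_nbhd_le (s : Finset (V ↪ Fin n)) :
    #(nbhd G s) ≤ #s * (2 * #G.edgeFinset ^ 2 * n ^ (Fintype.card V - 2)) := by
  have h_U : #(s.sup (copyEdges G)) ≤ #s * #G.edgeFinset := by
    rw [sup_eq_biUnion]
    exact card_biUnion_le_card_mul _ _ _ fun f _ => (card_copyEdges G f).le
  have h_sub : nbhd G s ⊆ (s.sup (copyEdges G) ×ˢ G.edgeFinset).biUnion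
      fun q => {g : V ↪ Fin n | Sym2.map g q.2 = q.1} := by
    intro g hg
    obtain ⟨t, ht⟩ := (mem_filter.1 hg).2
    obtain ⟨e, he, rfl⟩ := mem_image.1 (mem_inter.1 ht).1
    exact mem_biUnion.2 ⟨(_, e), mem_product.2 ⟨(mem_inter.1 ht).2, he⟩,
      mem_filter.2 ⟨mem_univ _, rfl⟩⟩
  have h_fiber : ∀ q ∈ s.sup (copyEdges G) ×ˢ G.edgeFinset,
      #{g : V ↪ Fin n | Sym2.map g q.2 = q.1} ≤ 2 * n ^ (Fintype.card V - 2) := by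
    rintro ⟨t, e⟩ hq
    induction e using Sym2.ind with
    | _ a b =>
      have hab : a ≠ b := (G.mem_edgeFinset.1 (mem_product.1 hq).2).ne
      simpa using card_embedding_filter_map_eq_le hab t
  calc #(nbhd G s)
      ≤ #(s.sup (copyEdges G)) * #G.edgeFinset * (2 * n ^ (Fintype.card V - 2)) := by
        rw [← card_product]
        exact (card_le_card h_sub).trans (card_biUnion_le_card_mul _ _ _ h_fiber)
    _ ≤ #s * #G.edgeFinset * #G.edgeFinset * (2 * n ^ (Fintype.card V - 2)) := by gcongr
    _ = #s * (2 * #G.edgeFinset ^ 2 * n ^ (Fintype.card V - 2)) := by ring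

theorem copyIndicator_eq_prod_copyEdges (f : V ↪ Fin n) (ω : Sym2 (Fin n) → Bool) :
    copyIndicator G f ω = ∏ s ∈ copyEdges G f, if ω s then (1 : ℝ) else 0 :=
  (prod_image (f := fun s => if ω s then (1 : ℝ) else 0)
    fun _ _ _ _ h => Sym2.map.injective f.injective h).symm

theorem copyIndicator_mul (f g : V ↪ Fin n) (ω : Sym2 (Fin n) → Bool) :
    copyIndicator G f ω * copyIndicator G g ω =
      ∏ s ∈ copyEdges G f ∪ copyEdges G g, if ω s then (1 : ℝ) else 0 := by
  simp only [copyIndicator_eq_prod_copyEdges, prod_boole, ite_zero_mul_ite_zero, mul_one,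
    forall_mem_union]

theorem copyIndicator_nonneg (f : V ↪ Fin n) (ω : Sym2 (Fin n) → Bool) :
    0 ≤ copyIndicator G f ω :=
  prod_nonneg fun _ _ => by split <;> norm_num

theorem copyIndicator_le_one (f : V ↪ Fin n) (ω : Sym2 (Fin n) → Bool) :
    copyIndicator G f ω ≤ 1 :=
  prod_le_one (fun _ _ => by split <;> norm_num) fun _ _ => by split <;> norm_num

variable {p : ℝ} (hp : ENNReal.ofReal p ≤ 1)

theorem integral_copyIndicator (hp0 : 0 ≤ p) (f : V ↪ Fin n) :
    ∫ ω, copyIndicator G f ω ∂erdosRenyi n _ hp = p ^ #G.edgeFinset := by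
  simp_rw [copyIndicator_eq_prod_copyEdges]
  rw [integral_prod_edge_erdosRenyi, ENNReal.toReal_ofReal hp0, card_copyEdges]

theorem covariance_copyIndicator (hp0 : 0 ≤ p) (f g : V ↪ Fin n) :
    cov[copyIndicator G f, copyIndicator G g; erdosRenyi n _ hp] =
      p ^ #(copyEdges G f ∪ copyEdges G g) - p ^ #G.edgeFinset * p ^ #G.edgeFinset := by
  rw [covariance_eq_sub MemLp.of_discrete MemLp.of_discrete, integral_copyIndicator G hp hp0,
    integral_copyIndicator G hp hp0]
  simp_rw [Pi.mul_apply, copyIndicator_mul]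
  rw [integral_prod_edge_erdosRenyi, ENNReal.toReal_ofReal hp0]

theorem variance_subgraphCount :
    variance (subgraphCount G n) (erdosRenyi n _ hp) =
      ∑ f, ∑ g, cov[copyIndicator G f, copyIndicator G g; erdosRenyi n _ hp] :=
  variance_fun_sum fun _ => MemLp.of_discrete

theorem covariance_copyIndicator_nonneg (hp0 : 0 ≤ p) (f g : V ↪ Fin n) :
    0 ≤ cov[copyIndicator G f, copyIndicator G g; erdosRenyi n _ hp] := by
  have h_card : #(copyEdges G f ∪ copyEdges G g) ≤ #G.edgeFinset + #G.edgeFinset :=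
    (card_union_le _ _).trans_eq (by rw [card_copyEdges, card_copyEdges])
  rw [covariance_copyIndicator G hp hp0, sub_nonneg, ← pow_add]
  exact pow_le_pow_of_le_one hp0 (ENNReal.ofReal_le_one.1 hp) h_card

theorem le_covariance_copyIndicator (hp0 : 0 ≤ p) {f g : V ↪ Fin n}
    (h : (copyEdges G f ∩ copyEdges G g).Nonempty) :
    p ^ (2 * #G.edgeFinset) * (1 - p) ≤
      cov[copyIndicator G f, copyIndicator G g; erdosRenyi n _ hp] := by
  have hp1 := ENNReal.ofReal_le_one.1 hp
  set k := #(copyEdges G f ∪ copyEdges G g)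
  have h_card : k + 1 ≤ 2 * #G.edgeFinset := by
    have := card_union_add_card_inter (copyEdges G f) (copyEdges G g)
    rw [card_copyEdges, card_copyEdges] at this
    have := h.card_pos
    omega
  have h_le : p ^ (2 * #G.edgeFinset) ≤ p ^ (k + 1) := pow_le_pow_of_le_one hp0 hp1 h_card
  have h_le' : p ^ (2 * #G.edgeFinset) ≤ p ^ k :=
    h_le.trans (pow_le_pow_of_le_one hp0 hp1 k.le_succ)
  rw [covariance_copyIndicator G hp hp0, ← pow_add, ← two_mul]
  calc p ^ (2 * #G.edgeFinset) * (1 - p) ≤ p ^ k * (1 - p) := by gcongr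
    _ = p ^ k - p ^ (k + 1) := by ring
    _ ≤ p ^ k - p ^ (2 * #G.edgeFinset) := by linarith

theorem le_variance_subgraphCount (hp0 : 0 ≤ p) {a b : V} (hab : s(a, b) ∈ G.edgeFinset) :
    p ^ (2 * #G.edgeFinset) * (1 - p) *
        #{q : (V ↪ Fin n) × (V ↪ Fin n) | (q.1 a, q.1 b) = (q.2 a, q.2 b)} ≤
      variance (subgraphCount G n) (erdosRenyi n _ hp) := by
  have h_shared : ∀ f g : V ↪ Fin n, (f a, f b) = (g a, g b) →
      (copyEdges G f ∩ copyEdges G g).Nonempty := by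
    intro f g hfg
    obtain ⟨ha, hb⟩ := Prod.mk.inj hfg
    refine ⟨Sym2.map f s(a, b), mem_inter.2 ⟨mem_image_of_mem _ hab, ?_⟩⟩
    rw [Sym2.map_mk, ha, hb]
    exact mem_image_of_mem _ hab
  rw [variance_subgraphCount, ← Fintype.sum_prod_type', mul_comm, ← nsmul_eq_mul, ← sum_const]
  calc _ ≤ ∑ q ∈ {q : (V ↪ Fin n) × (V ↪ Fin n) | (q.1 a, q.1 b) = (q.2 a, q.2 b)},
        cov[copyIndicator G q.1, copyIndicator G q.2; erdosRenyi n _ hp] :=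
        sum_le_sum fun q hq =>
          le_covariance_copyIndicator G hp hp0 (h_shared _ _ (mem_filter.1 hq).2)
    _ ≤ _ := sum_le_univ_sum_of_nonneg fun q => covariance_copyIndicator_nonneg G hp hp0 _ _

theorem abs_mul_copyIndicator_sub_le {B : ℝ} (hB : 0 ≤ B) (hp0 : 0 ≤ p) (hp1 : p ≤ 1)
    (f : V ↪ Fin n) (ω : Sym2 (Fin n) → Bool) :
    |B * (copyIndicator G f ω - p ^ #G.edgeFinset)| ≤ B := by
  rw [abs_mul, abs_of_nonneg hB]
  exact mul_le_of_le_one_right hB (abs_sub_le_of_nonneg_of_le (copyIndicator_nonneg G f ω)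
    (copyIndicator_le_one G f ω) (by positivity)
    (pow_le_one₀ hp0 hp1))

theorem integral_abs_mul_copyIndicator_sub_le {B : ℝ} (hB : 0 ≤ B) (hp0 : 0 ≤ p)
    (f : V ↪ Fin n) :
    ∫ ω, |B * (copyIndicator G f ω - p ^ #G.edgeFinset)| ∂erdosRenyi n _ hp ≤
      B * (2 * #G.edgeFinset * (1 - p)) := by
  have h_bernoulli := one_add_mul_le_pow (a := p - 1) (by linarith) #G.edgeFinset
  rw [add_sub_cancel] at h_bernoulli
  simp_rw [abs_mul, abs_of_nonneg hB]
  rw [integral_const_mul]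
  gcongr
  calc _ ≤ 2 * (1 - p ^ #G.edgeFinset) := by
        simpa only [integral_copyIndicator G hp hp0] using
          integral_abs_sub_integral_le (μ := erdosRenyi n _ hp) Integrable.of_finite
            (copyIndicator_le_one G f)
    _ ≤ 2 * #G.edgeFinset * (1 - p) := by linarith

theorem one_sub_mul_sq_card_embedding_le_variance (hp_half : 1 / 2 ≤ p) {a b : V}
    (hab : s(a, b) ∈ G.edgeFinset) :
    (1 - p) * (Fintype.card (V ↪ Fin n) : ℝ) ^ 2 ≤
      4 ^ #G.edgeFinset * n ^ 2 * variance (subgraphCount G n) (erdosRenyi n _ hp) := by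
  have hp1 := ENNReal.ofReal_le_one.1 hp
  have h_pairs : (Fintype.card (V ↪ Fin n) : ℝ) ^ 2 ≤
      n ^ 2 * #{q : (V ↪ Fin n) × (V ↪ Fin n) | (q.1 a, q.1 b) = (q.2 a, q.2 b)} := by
    have := card_sq_le_card_mul_card_filter_eq fun f : V ↪ Fin n => (f a, f b)
    rw [Fintype.card_prod, Fintype.card_fin] at this
    exact_mod_cast (by simpa [sq] using this)
  have h_pow : 1 ≤ 4 ^ #G.edgeFinset * p ^ (2 * #G.edgeFinset) := by
    rw [pow_mul, ← mul_pow]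
    exact one_le_pow₀ (by nlinarith)
  calc (1 - p) * (Fintype.card (V ↪ Fin n) : ℝ) ^ 2
      ≤ (1 - p) * (n ^ 2 * #{q : (V ↪ Fin n) × (V ↪ Fin n) | (q.1 a, q.1 b) = (q.2 a, q.2 b)}) *
          (4 ^ #G.edgeFinset * p ^ (2 * #G.edgeFinset)) := by
        rw [← mul_one ((1 - p) * _)]
        gcongr
    _ = 4 ^ #G.edgeFinset * n ^ 2 * (p ^ (2 * #G.edgeFinset) * (1 - p) *
          #{q : (V ↪ Fin n) × (V ↪ Fin n) | (q.1 a, q.1 b) = (q.2 a, q.2 b)}) := by ring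
    _ ≤ _ := by gcongr; exact le_variance_subgraphCount G hp (by linarith) hab

end Copies

/-- In the application `D` is the number of copies, `M = 2 e(G)² n^(v-2)` bounds the growth of the
neighbourhoods, `σ2 = Var S` and `K = v^v`. -/
theorem gamma_bound_of_variance_lower_bound {e : ℕ} {E K n D M σ2 q : ℝ} (hE : 0 ≤ E) (hq : 0 < q)
    (hD : 0 < D) (hM0 : 0 ≤ M) (hM : M * n ^ 2 ≤ 2 * E ^ 2 * (K * D))
    (hσ2 : q * D ^ 2 ≤ 4 ^ e * n ^ 2 * σ2) :
    3 * (D * (6 * M ^ 3) * ((√σ2)⁻¹ ^ 4 * (2 * E * q))) ≤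
      288 * E ^ 7 * 16 ^ e * K ^ 3 * (n ^ 2)⁻¹ * q⁻¹ := by
  have hσ2_pos : 0 < σ2 := by
    have : 0 < 4 ^ e * n ^ 2 * σ2 := lt_of_lt_of_le (by positivity) hσ2
    exact pos_of_mul_pos_right this (by positivity)
  have h_inv : (√σ2)⁻¹ ^ 4 ≤ (4 ^ e * n ^ 2) ^ 2 / (q * D ^ 2) ^ 2 := by
    rw [inv_pow, show (4 : ℕ) = 2 * 2 from rfl, pow_mul, Real.sq_sqrt hσ2_pos.le, ← inv_pow,
      ← div_pow]
    gcongr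
    rw [inv_le_iff_one_le_mul₀ hσ2_pos, div_mul_eq_mul_div, one_le_div (by positivity)]
    linarith
  have h16 : (16 : ℝ) ^ e = (4 ^ e) ^ 2 := by rw [← pow_mul, mul_comm, pow_mul]; norm_num
  rw [h16]
  calc _ ≤ 3 * (D * (6 * M ^ 3) * ((4 ^ e * n ^ 2) ^ 2 / (q * D ^ 2) ^ 2 * (2 * E * q))) := by
        gcongr
    _ = 36 * E * (4 ^ e) ^ 2 * (M * n ^ 2) ^ 3 / (D ^ 3 * n ^ 2 * q) := by
        field_simp
        ring
    _ ≤ 36 * E * (4 ^ e) ^ 2 * (2 * E ^ 2 * (K * D)) ^ 3 / (D ^ 3 * n ^ 2 * q) := by gcongr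
    _ = 288 * E ^ 7 * (4 ^ e) ^ 2 * K ^ 3 * (n ^ 2)⁻¹ * q⁻¹ := by
        field_simp
        ring

/-- In the subgraph-count setting with `1/2 < p < 1`, the quantity `γ = γ₁ + γ₂ + γ₃`
built from `X_i = σ⁻¹(Y_i - p^{e(G)})` and the neighborhoods
`A_i = {j : e(G_j ∩ G_i) ≥ 1}` etc. satisfies `γ ≤ C(G) n⁻² (1-p)⁻¹`. -/
theorem gamma_bound_subgraph_count_large_p
    (V : Type) [Fintype V] [DecidableEq V] (G : SimpleGraph V) [DecidableRel G.Adj]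
    (hG : G.edgeFinset.Nonempty) :
    ∃ C : ℝ, 0 < C ∧
      ∀ (n : ℕ) (p : ℝ) (hp0 : 1 / 2 < p) (hp1 : p < 1),
      ∀ μ : Measure (Sym2 (Fin n) → Bool),
        μ = erdosRenyi n (ENNReal.ofReal p) (ENNReal.ofReal_le_one.mpr hp1.le) →
      ∀ X : (V ↪ Fin n) → (Sym2 (Fin n) → Bool) → ℝ,
        X = (fun f ω => (Real.sqrt (variance (subgraphCount G n) μ))⁻¹ *
              (copyIndicator G f ω - p ^ G.edgeFinset.card)) →
        (∑ i : V ↪ Fin n, ∑ j ∈ nbhd G {i}, ∑ k ∈ nbhd G {i, j}, ∑ l ∈ nbhd G {i, j, k},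
            ∫ ω, |X i ω * X j ω * X k ω * X l ω| ∂μ) +
        (∑ i : V ↪ Fin n, ∑ j ∈ nbhd G {i}, ∑ k ∈ nbhd G {i, j}, ∑ l ∈ nbhd G {i, j, k},
            (∫ ω, |X i ω * X j ω| ∂μ) * ∫ ω, |X k ω * X l ω| ∂μ) +
        (∑ i : V ↪ Fin n, ∑ j ∈ nbhd G {i}, ∑ k ∈ nbhd G {i, j}, ∑ l ∈ nbhd G {i, j, k},
            (∫ ω, |X i ω * X j ω * X k ω| ∂μ) * ∫ ω, |X l ω| ∂μ) ≤
          C * ((n : ℝ) ^ 2)⁻¹ * (1 - p)⁻¹ := by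
  obtain ⟨⟨a, b⟩, hab⟩ := hG
  set E := #G.edgeFinset
  set N := Fintype.card V
  have hE : (0 : ℝ) < E := by exact_mod_cast card_pos.2 ⟨_, hab⟩
  have hN : (0 : ℝ) < N := by exact_mod_cast Fintype.card_pos_iff.2 ⟨a⟩
  refine ⟨288 * E ^ 7 * 16 ^ E * (N ^ N) ^ 3, by positivity, ?_⟩
  rintro n p hp0 hp1 μ rfl X rfl
  have hp := ENNReal.ofReal_le_one.mpr hp1.le
  have h1p : 0 < 1 - p := sub_pos.2 hp1
  set B := (√(variance (subgraphCount G n) (erdosRenyi n _ hp)))⁻¹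
  have hB : 0 ≤ B := by positivity
  refine (gamma_sums_le (nbhd G) (card_nbhd_le G) (fun _ => Integrable.of_finite) hB
    (abs_mul_copyIndicator_sub_le G hB (by linarith) hp1.le) (by positivity)
    (integral_abs_mul_copyIndicator_sub_le G hp hB (by linarith))).trans ?_
  rcases (Fintype.card (V ↪ Fin n)).eq_zero_or_pos with hD | hD
  · rw [hD, Nat.cast_zero, zero_mul, zero_mul, mul_zero]
    positivity
  obtain ⟨f⟩ := Fintype.card_pos_iff.1 hD
  have hNn : N ≤ n := by simpa using Fintype.card_le_of_embedding f
  have hN2 : 2 ≤ N := (card_pair (G.mem_edgeFinset.1 hab).ne).symm.le.trans (card_le_univ _)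
  refine gamma_bound_of_variance_lower_bound hE.le h1p (by exact_mod_cast hD) (by positivity) ?_
    (one_sub_mul_sq_card_embedding_le_variance G hp hp0.le hab)
  have h_count := Nat.pow_le_pow_self_mul_descFactorial hNn
  rw [← Fintype.card_fin n, ← Fintype.card_embedding_eq, Fintype.card_fin] at h_count
  push_cast
  rw [mul_assoc, pow_sub_mul_pow _ hN2]
  gcongr
  exact_mod_cast h_count
end
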